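/- Let f(x,y) = x²(x³+4y³)/(x³+y³) on the open first quadrant. Then the function g(φ) := lim_{r→0⁺} ∂_{xx} f(r cos φ, r sin φ) is not constant in φ ∈ (0, π/2). In particular, ∂_{xx} f has no limit at the origin. -/

import Mathlib

open Filter Topology Real

noncomputable def f13 : ℝ × ℝ → ℝ := fun v =>
  v.1 ^ 2 * (v.1 ^ 3 + 4 * v.2 ^ 3) / (v.1 ^ 3 + v.2 ^ 3)

noncomputable def fxx13 : ℝ × ℝ → ℝ := fun v =>
  deriv (fun x => deriv (fun x' => f13 (x', v.2)) x) v.1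

lemma lemA (y x : ℝ) (h : x ^ 3 + y ^ 3 ≠ 0) :
    HasDerivAt (fun x' => f13 (x', y))
      ((2*x^7 + x^4*y^3 + 8*x*y^6) / (x^3 + y^3)^2) x := by
  have h1 : HasDerivAt (fun x' : ℝ => x' ^ 2 * (x' ^ 3 + 4 * y ^ 3))
      (2*x * (x^3 + 4*y^3) + x^2 * (3*x^2)) x := by
    have := (hasDerivAt_pow 2 x).mul ((hasDerivAt_pow 3 x).add_const (4 * y ^ 3))
    refine this.congr_deriv ?_
    ring
  have h2 : HasDerivAt (fun x' : ℝ => x' ^ 3 + y ^ 3) (3 * x ^ 2) x := by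
    have := (hasDerivAt_pow 3 x).add_const (y ^ 3)
    simpa using this
  have := h1.div h2 h
  refine this.congr_deriv ?_
  field_simp
  ring

lemma lemB (y x : ℝ) (h : x ^ 3 + y ^ 3 ≠ 0) :
    HasDerivAt (fun x' => (2*x'^7 + x'^4*y^3 + 8*x'*y^6) / (x'^3 + y^3)^2)
      ((2*x^9 + 12*x^6*y^3 - 36*x^3*y^6 + 8*y^9) / (x^3 + y^3)^3) x := by
  have h1 : HasDerivAt (fun x' : ℝ => 2*x'^7 + x'^4*y^3 + 8*x'*y^6)
      (14*x^6 + 4*x^3*y^3 + 8*y^6) x := by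
    have := (((hasDerivAt_pow 7 x).const_mul 2).add
      ((hasDerivAt_pow 4 x).mul_const (y^3))).add ((hasDerivAt_id x).const_mul 8 |>.mul_const (y^6))
    refine this.congr_deriv ?_
    ring
  have h2 : HasDerivAt (fun x' : ℝ => (x'^3 + y^3)^2) (2 * (x^3+y^3) * (3*x^2)) x := by
    have := ((hasDerivAt_pow 3 x).add_const (y ^ 3)).pow 2
    refine this.congr_deriv ?_
    ring
  have hd : (x ^ 3 + y ^ 3) ^ 2 ≠ 0 := pow_ne_zero _ h
  have := h1.div h2 hd
  refine this.congr_deriv ?_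
  field_simp
  ring

lemma fxx_eq (x y : ℝ) (h : x ^ 3 + y ^ 3 ≠ 0) :
    fxx13 (x, y) = (2*x^9 + 12*x^6*y^3 - 36*x^3*y^6 + 8*y^9) / (x^3 + y^3)^3 := by
  have hc : ContinuousAt (fun x' : ℝ => x' ^ 3 + y ^ 3) x := by fun_prop
  have hev : ∀ᶠ x' in 𝓝 x, x' ^ 3 + y ^ 3 ≠ 0 := hc.eventually_ne h
  have hderiv : (fun x' => deriv (fun t => f13 (t, y)) x') =ᶠ[𝓝 x]
      (fun x' => (2*x'^7 + x'^4*y^3 + 8*x'*y^6) / (x'^3 + y^3)^2) :=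
    hev.mono fun x' hx' => (lemA y x' hx').deriv
  have : fxx13 (x, y) = deriv (fun x' => (2*x'^7 + x'^4*y^3 + 8*x'*y^6) / (x'^3 + y^3)^2) x :=
    hderiv.deriv_eq
  rw [this, (lemB y x h).deriv]

noncomputable def g13 : ℝ → ℝ := fun φ =>
  (2*(cos φ)^9 + 12*(cos φ)^6*(sin φ)^3 - 36*(cos φ)^3*(sin φ)^6 + 8*(sin φ)^9)
    / ((cos φ)^3 + (sin φ)^3)^3

lemma cs_pos {φ : ℝ} (hφ : φ ∈ Set.Ioo 0 (π / 2)) : 0 < cos φ ∧ 0 < sin φ := by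
  constructor
  · exact Real.cos_pos_of_mem_Ioo ⟨by linarith [hφ.1, Real.pi_pos], hφ.2⟩
  · exact Real.sin_pos_of_pos_of_lt_pi hφ.1 (by linarith [hφ.2, Real.pi_pos])

lemma ray_val {φ : ℝ} (hφ : φ ∈ Set.Ioo 0 (π / 2)) {r : ℝ} (hr : 0 < r) :
    fxx13 (r * cos φ, r * sin φ) = g13 φ := by
  obtain ⟨hc, hs⟩ := cs_pos hφ
  have hden : (cos φ) ^ 3 + (sin φ) ^ 3 ≠ 0 := by positivity
  have h : (r * cos φ) ^ 3 + (r * sin φ) ^ 3 ≠ 0 := by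
    have : (r * cos φ) ^ 3 + (r * sin φ) ^ 3 = r ^ 3 * ((cos φ)^3 + (sin φ)^3) := by ring
    rw [this]
    positivity
  rw [fxx_eq _ _ h, g13]
  rw [div_eq_div_iff (pow_ne_zero _ h) (pow_ne_zero _ hden)]
  ring

lemma ray_tendsto {φ : ℝ} (hφ : φ ∈ Set.Ioo 0 (π / 2)) :
    Tendsto (fun r => fxx13 (r * Real.cos φ, r * Real.sin φ)) (𝓝[>] 0) (𝓝 (g13 φ)) := by
  apply Tendsto.congr' _ tendsto_const_nhds
  filter_upwards [self_mem_nhdsWithin] with r (hr : (0:ℝ) < r)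
  exact (ray_val hφ hr).symm

lemma g_arctan (t : ℝ) (ht : (1:ℝ) + t ^ 3 ≠ 0) :
    g13 (arctan t) = (2 + 12*t^3 - 36*t^6 + 8*t^9) / (1 + t^3)^3 := by
  have hu : (0:ℝ) < Real.sqrt (1 + t ^ 2) := Real.sqrt_pos.2 (by positivity)
  rw [g13, Real.cos_arctan, Real.sin_arctan]
  rw [div_eq_div_iff, one_div]
  · field_simp
  · have : (1 / Real.sqrt (1 + t ^ 2)) ^ 3 + (t / Real.sqrt (1 + t ^ 2)) ^ 3
        = (1 + t ^ 3) / (Real.sqrt (1 + t ^ 2)) ^ 3 := by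
      field_simp
    rw [this]
    exact pow_ne_zero _ (div_ne_zero ht (by positivity))
  · exact pow_ne_zero _ ht

lemma arctan_mem {t : ℝ} (ht : 0 < t) : arctan t ∈ Set.Ioo 0 (π / 2) :=
  ⟨by rw [← Real.arctan_zero]; exact Real.arctan_strictMono ht, Real.arctan_lt_pi_div_two t⟩

theorem stmt13 :
    ∃ g : ℝ → ℝ,
      (∀ φ ∈ Set.Ioo 0 (π / 2),
        Tendsto (fun r => fxx13 (r * Real.cos φ, r * Real.sin φ)) (𝓝[>] 0)
          (𝓝 (g φ))) ∧
      (∃ φ₁ ∈ Set.Ioo 0 (π / 2), ∃ φ₂ ∈ Set.Ioo 0 (π / 2), g φ₁ ≠ g φ₂) ∧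
      ¬ ∃ l : ℝ, Tendsto fxx13 (𝓝[{v : ℝ × ℝ | 0 < v.1 ∧ 0 < v.2}] 0) (𝓝 l) := by
  have h1 : arctan 1 ∈ Set.Ioo 0 (π / 2) := arctan_mem one_pos
  have h2 : arctan 2 ∈ Set.Ioo 0 (π / 2) := arctan_mem two_pos
  have hg1 : g13 (arctan 1) = -7/4 := by
    rw [g_arctan 1 (by norm_num)]; norm_num
  have hg2 : g13 (arctan 2) = 70/27 := by
    rw [g_arctan 2 (by norm_num)]; norm_num
  have hne : g13 (arctan 1) ≠ g13 (arctan 2) := by rw [hg1, hg2]; norm_num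
  refine ⟨g13, fun φ hφ => ray_tendsto hφ, ⟨_, h1, _, h2, hne⟩, ?_⟩
  rintro ⟨l, hl⟩
  have key : ∀ φ ∈ Set.Ioo 0 (π / 2), g13 φ = l := by
    intro φ hφ
    obtain ⟨hc, hs⟩ := cs_pos hφ
    have hray : Tendsto (fun r : ℝ => ((r * cos φ, r * sin φ) : ℝ × ℝ)) (𝓝[>] 0)
        (𝓝[{v : ℝ × ℝ | 0 < v.1 ∧ 0 < v.2}] 0) := by
      rw [tendsto_nhdsWithin_iff]
      constructor
      · have : Continuous (fun r : ℝ => ((r * cos φ, r * sin φ) : ℝ × ℝ)) := by fun_prop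
        have h0 := this.tendsto 0
        simp only [zero_mul] at h0
        exact h0.mono_left nhdsWithin_le_nhds
      · filter_upwards [self_mem_nhdsWithin] with r (hr : (0:ℝ) < r)
        exact ⟨mul_pos hr hc, mul_pos hr hs⟩
    have := hl.comp hray
    exact tendsto_nhds_unique (ray_tendsto hφ) this
  rw [key _ h1, key _ h2] at hne
  exact hne rfl
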